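/- Suppose each f_i is convex and L_i-smooth and x* is a global minimizer of F (so ∇F(x*) = 0). Then for all x, w ∈ ℝ^d, (L̄/n)∑_{i=1}^n (1/L_i)‖∇f_i(x) − ∇f_i(w)‖² ≤ 4L̄(F(x) − F(x*)) + 2L̄·D(w), where D(w) = (1/n)∑_{i=1}^n (1/L_i)‖∇f_i(w) − ∇f_i(x*)‖². -/

import Mathlib

open MeasureTheory Finset
open scoped RealInnerProductSpace BigOperators

abbrev Euc (d : ℕ) := EuclideanSpace ℝ (Fin d)

/-- The finite-sum objective `F(x) = (1/n) ∑ f i x`. -/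
noncomputable def avgF {d : ℕ} (n : ℕ) (f : Fin n → Euc d → ℝ) (x : Euc d) : ℝ :=
  (1 / (n : ℝ)) * ∑ i, f i x

/-- The gradient of the finite-sum objective, `∇F(x) = (1/n) ∑ ∇f i x`. -/
noncomputable def avgG {d : ℕ} (n : ℕ) (f' : Fin n → Euc d → Euc d) (x : Euc d) : Euc d :=
  (1 / (n : ℝ)) • ∑ i, f' i x

/-- The effective sampling variance `V_e(q; x, w)`. -/
noncomputable def Ve {d : ℕ} (n : ℕ) (f' : Fin n → Euc d → Euc d)
    (q : Fin n → ℝ) (x w : Euc d) : ℝ :=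
  (1 / (n : ℝ) ^ 2) * ∑ i, (1 / q i) * ‖f' i x - f' i w‖ ^ 2

/-- The average smoothness constant `L̄ = (1/n) ∑ L i`. -/
noncomputable def Lbar (n : ℕ) (L : Fin n → ℝ) : ℝ := (1 / (n : ℝ)) * ∑ i, L i

/-- The importance sampling distribution `p^IS_i = L i / (n L̄)`. -/
noncomputable def pIS (n : ℕ) (L : Fin n → ℝ) (i : Fin n) : ℝ :=
  L i / ((n : ℝ) * Lbar n L)

/-- `D(w) = (1/n) ∑ (1 / L i) ‖∇f i w - ∇f i x*‖²`. -/
noncomputable def Dfun {d : ℕ} (n : ℕ) (f' : Fin n → Euc d → Euc d) (L : Fin n → ℝ)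
    (xstar w : Euc d) : ℝ :=
  (1 / (n : ℝ)) * ∑ i, (1 / L i) * ‖f' i w - f' i xstar‖ ^ 2

/-!
Each `∇fᵢ` is co-coercive: comparing the supporting hyperplane of `fᵢ` at `y` with the descent
lemma at the gradient step `x - ∇fᵢ(x)/Lᵢ` gives
`‖∇fᵢ(x) - ∇fᵢ(y)‖² / Lᵢ ≤ 2 (fᵢ(x) - fᵢ(y) - ⟪∇fᵢ(y), x - y⟫)`.
Averaging at `y = x*` kills the linear terms because `∇F(x*) = 0`, so the `x*`-centred weighted
gradient differences at `x` are bounded by `2 (F(x) - F(x*))`; splitting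
`‖a - b‖² ≤ 2‖a - c‖² + 2‖b - c‖²` at `c = ∇fᵢ(x*)` finishes the proof.
-/

section Smooth

variable {E : Type*} [NormedAddCommGroup E] [InnerProductSpace ℝ E] [CompleteSpace E]
  {f : E → ℝ} {f' : E → E} {L : ℝ}

theorem HasGradientAt.hasDerivAt_comp_add_smul {g x v : E} {t : ℝ}
    (h : HasGradientAt f g (x + t • v)) : HasDerivAt (fun s : ℝ => f (x + s • v)) ⟪g, v⟫ t := by
  have hline : HasDerivAt (fun s : ℝ => x + s • v) v t := by
    simpa using ((hasDerivAt_id t).smul_const v).const_add x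
  simpa [Function.comp_def] using h.hasFDerivAt.comp_hasDerivAt t hline

theorem IsLocalMin.hasGradientAt_eq_zero {g a : E} (h : IsLocalMin f a)
    (hf : HasGradientAt f g a) : g = 0 := by
  have := h.hasFDerivAt_eq_zero hf.hasFDerivAt
  exact (InnerProductSpace.toDual ℝ E).map_eq_zero_iff.1 this

theorem le_add_inner_add_half_mul_norm_sq (hg : ∀ x, HasGradientAt f (f' x) x)
    (hs : ∀ x y, ‖f' x - f' y‖ ≤ L * ‖x - y‖) (x y : E) :
    f y ≤ f x + ⟪f' x, y - x⟫ + L / 2 * ‖y - x‖ ^ 2 := by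
  set c := y - x
  let φ : ℝ → ℝ := fun t => f (x + t • c) - t * ⟪f' x, c⟫ - L / 2 * t ^ 2 * ‖c‖ ^ 2
  have hφ : ∀ t, HasDerivAt φ (⟪f' (x + t • c), c⟫ - ⟪f' x, c⟫ - L * t * ‖c‖ ^ 2) t := by
    intro t
    have hlin : HasDerivAt (fun t : ℝ => t * ⟪f' x, c⟫) ⟪f' x, c⟫ t := by
      simpa using (hasDerivAt_id t).mul_const ⟪f' x, c⟫
    have hq : HasDerivAt (fun t : ℝ => L / 2 * t ^ 2 * ‖c‖ ^ 2) (L * t * ‖c‖ ^ 2) t :=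
      (((hasDerivAt_pow 2 t).const_mul (L / 2)).mul_const _).congr_deriv (by push_cast; ring)
    exact (((hg (x + t • c)).hasDerivAt_comp_add_smul).sub hlin).sub hq
  have hφ' : ∀ t ∈ interior (Set.Icc (0 : ℝ) 1), deriv φ t ≤ 0 := by
    intro t ht
    rw [interior_Icc] at ht
    have hlip : ‖f' (x + t • c) - f' x‖ ≤ L * (t * ‖c‖) := by
      simpa [norm_smul, abs_of_pos ht.1] using hs (x + t • c) x
    have hcs := real_inner_le_norm (f' (x + t • c) - f' x) c
    rw [(hφ t).deriv, ← inner_sub_left]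
    nlinarith [norm_nonneg c]
  have hanti : AntitoneOn φ (Set.Icc 0 1) :=
    antitoneOn_of_deriv_nonpos (convex_Icc 0 1)
      (fun t _ => (hφ t).continuousAt.continuousWithinAt)
      (fun t _ => (hφ t).differentiableAt.differentiableWithinAt) hφ'
  have h01 := hanti (Set.left_mem_Icc.2 zero_le_one) (Set.right_mem_Icc.2 zero_le_one) zero_le_one
  simp only [φ, zero_smul, add_zero, one_smul, c, add_sub_cancel] at h01
  linarith

theorem inv_mul_norm_sub_sq_le (hg : ∀ x, HasGradientAt f (f' x) x) (hL : 0 < L)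
    (hconv : ∀ x y, f x + ⟪f' x, y - x⟫ ≤ f y)
    (hs : ∀ x y, ‖f' x - f' y‖ ≤ L * ‖x - y‖) (x y : E) :
    1 / L * ‖f' x - f' y‖ ^ 2 ≤ 2 * (f x - f y - ⟪f' y, x - y⟫) := by
  set g := f' x - f' y
  set z := x - L⁻¹ • g
  have hbound := (hconv y z).trans (le_add_inner_add_half_mul_norm_sq hg hs x z)
  have hzy : z - y = (x - y) - L⁻¹ • g := by simp only [z]; abel
  have hzx : z - x = -(L⁻¹ • g) := by simp only [z]; abel
  have hgg : ⟪f' x, g⟫ - ⟪f' y, g⟫ = ‖g‖ ^ 2 := by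
    rw [← inner_sub_left, real_inner_self_eq_norm_sq]
  rw [hzy, hzx, inner_sub_right, inner_neg_right, real_inner_smul_right, real_inner_smul_right,
    norm_neg, norm_smul, Real.norm_of_nonneg (inv_nonneg.2 hL.le)] at hbound
  have hquad : L / 2 * (L⁻¹ * ‖g‖) ^ 2 = L⁻¹ * ‖g‖ ^ 2 / 2 := by field_simp
  rw [one_div]
  linear_combination 2 * hbound - 2 * L⁻¹ * hgg + 2 * hquad

end Smooth

theorem sum_mul_norm_sub_sq_le {ι E : Type*} [SeminormedAddCommGroup E] (s : Finset ι)
    (a : ι → ℝ) (ha : ∀ i ∈ s, 0 ≤ a i) (u v : ι → E) :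
    ∑ i ∈ s, a i * ‖u i - v i‖ ^ 2 ≤
      2 * ∑ i ∈ s, a i * ‖u i‖ ^ 2 + 2 * ∑ i ∈ s, a i * ‖v i‖ ^ 2 := by
  simp only [mul_sum, ← sum_add_distrib]
  refine sum_le_sum fun i hi => ?_
  have htri : ‖u i - v i‖ ^ 2 ≤ 2 * (‖u i‖ ^ 2 + ‖v i‖ ^ 2) :=
    (pow_le_pow_left₀ (norm_nonneg _) (norm_sub_le _ _) 2).trans add_sq_le
  nlinarith [mul_le_mul_of_nonneg_left htri (ha i hi)]

section FiniteSum

variable {d n : ℕ} {f : Fin n → Euc d → ℝ} {f' : Fin n → Euc d → Euc d}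

theorem hasGradientAt_avgF (hgrad : ∀ i x, HasGradientAt (f i) (f' i x) x) (x : Euc d) :
    HasGradientAt (avgF n f) (avgG n f' x) x := by
  rw [hasGradientAt_iff_hasFDerivAt, avgG, map_smul, map_sum]
  exact (HasFDerivAt.fun_sum fun i _ => (hgrad i x).hasFDerivAt).const_mul _

theorem Lbar_nonneg {L : Fin n → ℝ} (hL : ∀ i, 0 ≤ L i) : 0 ≤ Lbar n L :=
  mul_nonneg (by positivity) (sum_nonneg fun i _ => hL i)

theorem avg_inv_mul_norm_sub_sq_le {L : Fin n → ℝ}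
    (hgrad : ∀ i x, HasGradientAt (f i) (f' i x) x)
    (hconv : ∀ i x y, f i x + ⟪f' i x, y - x⟫ ≤ f i y) (hLpos : ∀ i, 0 < L i)
    (hsmooth : ∀ i x y, ‖f' i x - f' i y‖ ≤ L i * ‖x - y‖)
    {xstar : Euc d} (hmin : ∀ y, avgF n f xstar ≤ avgF n f y) (x : Euc d) :
    1 / (n : ℝ) * ∑ i, 1 / L i * ‖f' i x - f' i xstar‖ ^ 2 ≤
      2 * (avgF n f x - avgF n f xstar) := by
  have hcrit : avgG n f' xstar = 0 :=
    ((isMinOn_univ_iff.2 hmin).isLocalMin Filter.univ_mem).hasGradientAt_eq_zero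
      (hasGradientAt_avgF hgrad xstar)
  have hsum := sum_le_sum fun i (_ : i ∈ univ) =>
    inv_mul_norm_sub_sq_le (hgrad i) (hLpos i) (hconv i) (hsmooth i) x xstar
  have hinner : 1 / (n : ℝ) * ∑ i, ⟪f' i xstar, x - xstar⟫ = 0 := by
    rw [← sum_inner, ← real_inner_smul_left, ← avgG, hcrit, inner_zero_left]
  rw [avgF, avgF]
  simp only [← mul_sum, sum_sub_distrib] at hsum
  linarith [mul_le_mul_of_nonneg_left hsum (by positivity : (0 : ℝ) ≤ 1 / n)]

end FiniteSum

theorem weighted_gradient_diff_bound_general (d n : ℕ)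
    (f : Fin n → Euc d → ℝ) (f' : Fin n → Euc d → Euc d) (L : Fin n → ℝ)
    (hgrad : ∀ i x, HasGradientAt (f i) (f' i x) x)
    (hconv : ∀ i x y, f i x + ⟪f' i x, y - x⟫ ≤ f i y)
    (hLpos : ∀ i, 0 < L i)
    (hsmooth : ∀ i x y, ‖f' i x - f' i y‖ ≤ L i * ‖x - y‖)
    (xstar : Euc d) (hmin : ∀ y, avgF n f xstar ≤ avgF n f y)
    (x w : Euc d) :
    (Lbar n L / (n : ℝ)) * ∑ i, (1 / L i) * ‖f' i x - f' i w‖ ^ 2 ≤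
      4 * Lbar n L * (avgF n f x - avgF n f xstar) +
      2 * Lbar n L * Dfun n f' L xstar w := by
  have hsplit := sum_mul_norm_sub_sq_le univ (fun i => 1 / L i)
    (fun i _ => (one_div_pos.2 (hLpos i)).le)
    (fun i => f' i x - f' i xstar) (fun i => f' i w - f' i xstar)
  simp only [sub_sub_sub_cancel_right] at hsplit
  have hx := avg_inv_mul_norm_sub_sq_le hgrad hconv hLpos hsmooth hmin x
  have hLbar := Lbar_nonneg fun i => (hLpos i).le
  calc Lbar n L / n * ∑ i, 1 / L i * ‖f' i x - f' i w‖ ^ 2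
      = Lbar n L * (1 / n * ∑ i, 1 / L i * ‖f' i x - f' i w‖ ^ 2) := by ring
    _ ≤ Lbar n L * (1 / n * (2 * ∑ i, 1 / L i * ‖f' i x - f' i xstar‖ ^ 2 +
          2 * ∑ i, 1 / L i * ‖f' i w - f' i xstar‖ ^ 2)) := by gcongr
    _ ≤ Lbar n L * (2 * (2 * (avgF n f x - avgF n f xstar)) + 2 * Dfun n f' L xstar w) := by
        gcongr
        rw [Dfun]
        linarith
    _ = _ := by ring

/-- bound on the weighted gradient-difference average. -/
theorem weighted_gradient_diff_bound (d n : ℕ) (hd : 0 < d) (hn : 0 < n)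
    (f : Fin n → Euc d → ℝ) (f' : Fin n → Euc d → Euc d) (L : Fin n → ℝ)
    (hgrad : ∀ i x, HasGradientAt (f i) (f' i x) x)
    (hconv : ∀ i x y, f i x + ⟪f' i x, y - x⟫ ≤ f i y)
    (hLpos : ∀ i, 0 < L i)
    (hsmooth : ∀ i x y, ‖f' i x - f' i y‖ ≤ L i * ‖x - y‖)
    (xstar : Euc d) (hmin : ∀ y, avgF n f xstar ≤ avgF n f y)
    (x w : Euc d) :
    (Lbar n L / (n : ℝ)) * ∑ i, (1 / L i) * ‖f' i x - f' i w‖ ^ 2 ≤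
      4 * Lbar n L * (avgF n f x - avgF n f xstar) +
      2 * Lbar n L * Dfun n f' L xstar w :=
  weighted_gradient_diff_bound_general d n f f' L hgrad hconv hLpos hsmooth xstar hmin x w
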